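/- For every d × K real matrix X, 𝔼_r‖X − (m/d)·A(r)ᵀ·A(r)·X‖_F² = (1 − m/d)·‖X‖_F², where ‖·‖_F is the Frobenius norm. (This is the matrix form of the compression-operator identity used in step (a) of the variant of Lemma 18 for the analog implementation.) -/

import Mathlib

open Matrix BigOperators

/-- The random linear coding matrix `A(r) = (1/√m)·H·diag(r)`. -/
noncomputable def rlcA (m d : ℕ) (H : Matrix (Fin m) (Fin d) ℝ) (r : Fin d → ℝ) :
    Matrix (Fin m) (Fin d) ℝ :=
  (Real.sqrt m)⁻¹ • (H * Matrix.diagonal r)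

/-- The sign vector in `{−1,+1}^d` encoded by a Boolean vector. -/
def signVec {d : ℕ} (s : Fin d → Bool) : Fin d → ℝ := fun i => if s i then 1 else -1

/-- The squared Frobenius norm `‖M‖_F²` of a real matrix. -/
noncomputable def frobSq {a b : ℕ} (M : Matrix (Fin a) (Fin b) ℝ) : ℝ :=
  ∑ i, ∑ j, (M i j) ^ 2

/-!
With `R = diag r` and `G = Hᵀ H`, the compression operator `P(r) = (m/d) A(r)ᵀ A(r)` equals
`d⁻¹ R G R`. Since `R² = 1` and `G² = d G` (from `H Hᵀ = d I`), `P(r)` is a symmetric idempotent,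
so `‖X - P X‖² = ‖X‖² - tr (Xᵀ P X)`. Averaging `R G R` over all sign vectors kills the
off-diagonal entries of `G`, and its diagonal is `m` because `H` has `±1` entries; hence
`𝔼 P = (m/d) I`.
-/

lemma signVec_mul_self {d : ℕ} (s : Fin d → Bool) (i : Fin d) :
    signVec s i * signVec s i = 1 := by
  unfold signVec; split_ifs <;> norm_num

lemma sum_signVec_mul_signVec {d : ℕ} (i j : Fin d) :
    ∑ s : Fin d → Bool, signVec s i * signVec s j = if i = j then (2 : ℝ) ^ d else 0 := by
  split_ifs with hij
  · subst hij
    simp [signVec_mul_self]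
  · -- flipping the `i`-th sign negates every summand
    let flip : Equiv.Perm (Fin d → Bool) :=
      Equiv.piCongrRight fun k => if k = i then Equiv.boolNot else Equiv.refl Bool
    have hflip : ∀ s, signVec (flip s) i * signVec (flip s) j = -(signVec s i * signVec s j) := by
      intro s
      have hi : flip s i = !s i := by simp [flip]
      have hj : flip s j = s j := by simp [flip, Ne.symm hij]
      simp only [signVec, hi, hj]
      cases s i <;> cases s j <;> norm_num
    have := Equiv.sum_comp flip fun s => signVec s i * signVec s j
    simp only [hflip, Finset.sum_neg_distrib] at this
    linarith

lemma diagonal_signVec_mul_self {d : ℕ} (s : Fin d → Bool) :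
    diagonal (signVec s) * diagonal (signVec s) = (1 : Matrix (Fin d) (Fin d) ℝ) := by
  rw [diagonal_mul_diagonal, funext (signVec_mul_self s), diagonal_one]

lemma sum_diagonal_signVec_mul_mul_diagonal_signVec {d : ℕ} (M : Matrix (Fin d) (Fin d) ℝ) :
    ∑ s : Fin d → Bool, diagonal (signVec s) * M * diagonal (signVec s)
      = (2 : ℝ) ^ d • diagonal (fun i => M i i) := by
  ext i j
  simp only [Matrix.sum_apply, mul_diagonal, diagonal_mul, mul_comm (signVec _ i), mul_assoc,
    ← Finset.mul_sum, sum_signVec_mul_signVec, Matrix.smul_apply, diagonal_apply, smul_eq_mul]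
  rcases eq_or_ne i j with rfl | hij
  · simp [mul_comm]
  · simp [hij, hij.symm]

lemma transpose_mul_self_apply_self_of_sign {ι κ R : Type*} [Fintype ι] [CommRing R]
    (H : Matrix ι κ R) (hH : ∀ i j, H i j = 1 ∨ H i j = -1) (j : κ) :
    (Hᵀ * H) j j = Fintype.card ι := by
  have hsq : ∀ i, H i j * H i j = 1 := fun i => by rcases hH i j with h | h <;> simp [h]
  simp [mul_apply, hsq]

lemma transpose_mul_self_mul_transpose_mul_self {ι κ R : Type*} [Fintype ι] [Fintype κ]
    [DecidableEq ι] [CommSemiring R] (H : Matrix ι κ R) (c : R) (h : H * Hᵀ = c • 1) :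
    Hᵀ * H * (Hᵀ * H) = c • (Hᵀ * H) := by
  rw [Matrix.mul_assoc, ← Matrix.mul_assoc H, h, Matrix.smul_mul, Matrix.one_mul,
    Matrix.mul_smul]

lemma frobSq_eq_trace {a b : ℕ} (M : Matrix (Fin a) (Fin b) ℝ) : frobSq M = trace (Mᵀ * M) := by
  simp only [frobSq, trace, diag, mul_apply, transpose_apply, sq]
  exact Finset.sum_comm

lemma frobSq_sub_mul_of_isIdempotentElem {a b : ℕ} {P : Matrix (Fin a) (Fin a) ℝ}
    (hPt : Pᵀ = P) (hP : IsIdempotentElem P) (X : Matrix (Fin a) (Fin b) ℝ) :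
    frobSq (X - P * X) = frobSq X - trace (Xᵀ * P * X) := by
  have hQ : (1 - P)ᵀ * (1 - P) = 1 - P := by
    rw [transpose_sub, transpose_one, hPt]
    exact hP.one_sub
  rw [show X - P * X = (1 - P) * X by rw [Matrix.sub_mul, Matrix.one_mul],
    frobSq_eq_trace, frobSq_eq_trace, transpose_mul,
    Matrix.mul_assoc, ← Matrix.mul_assoc (1 - P)ᵀ, hQ, Matrix.sub_mul, Matrix.mul_sub,
    trace_sub, Matrix.one_mul, Matrix.mul_assoc]

noncomputable def rlcCompression (m d : ℕ) (H : Matrix (Fin m) (Fin d) ℝ) (r : Fin d → ℝ) :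
    Matrix (Fin d) (Fin d) ℝ :=
  ((m : ℝ) / d) • ((rlcA m d H r)ᵀ * rlcA m d H r)

section rlcCompression

variable {m d : ℕ} (H : Matrix (Fin m) (Fin d) ℝ)

lemma rlcCompression_transpose (r : Fin d → ℝ) :
    (rlcCompression m d H r)ᵀ = rlcCompression m d H r := by
  rw [rlcCompression, transpose_smul, transpose_mul, transpose_transpose]

lemma rlcCompression_eq (hm : 0 < m) (r : Fin d → ℝ) :
    rlcCompression m d H r = (d : ℝ)⁻¹ • (diagonal r * (Hᵀ * H) * diagonal r) := by
  have hm' : (m : ℝ) ≠ 0 := by positivity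
  have hsqrt : (Real.sqrt m)⁻¹ * (Real.sqrt m)⁻¹ = (m : ℝ)⁻¹ := by
    rw [← mul_inv, Real.mul_self_sqrt (Nat.cast_nonneg m)]
  simp only [rlcCompression, rlcA, transpose_smul, transpose_mul, diagonal_transpose,
    Matrix.smul_mul, Matrix.mul_smul, smul_smul, hsqrt, Matrix.mul_assoc]
  congr 1
  field_simp

lemma isIdempotentElem_rlcCompression (hm : 0 < m)
    (horth : H * Hᵀ = (d : ℝ) • (1 : Matrix (Fin m) (Fin m) ℝ)) (s : Fin d → Bool) :
    IsIdempotentElem (rlcCompression m d H (signVec s)) := by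
  set R := diagonal (signVec s)
  have key : R * (Hᵀ * H) * R * (R * (Hᵀ * H) * R) = (d : ℝ) • (R * (Hᵀ * H) * R) := by
    rw [show R * (Hᵀ * H) * R * (R * (Hᵀ * H) * R) = R * (Hᵀ * H * (R * R) * (Hᵀ * H)) * R by
        simp only [Matrix.mul_assoc],
      diagonal_signVec_mul_self, Matrix.mul_one,
      transpose_mul_self_mul_transpose_mul_self H _ horth, Matrix.mul_smul, Matrix.smul_mul]
  rw [IsIdempotentElem, rlcCompression_eq H hm, Matrix.smul_mul, Matrix.mul_smul, key,
    smul_smul, smul_smul, show (d : ℝ)⁻¹ * (d : ℝ)⁻¹ * d = (d : ℝ)⁻¹ by grind]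

lemma sum_rlcCompression_signVec (hm : 0 < m) (hH : ∀ i j, H i j = 1 ∨ H i j = -1) :
    ∑ s : Fin d → Bool, rlcCompression m d H (signVec s)
      = ((2 : ℝ) ^ d * (m / d)) • (1 : Matrix (Fin d) (Fin d) ℝ) := by
  have hdiag : diagonal (fun j => (Hᵀ * H) j j) = (m : ℝ) • (1 : Matrix (Fin d) (Fin d) ℝ) := by
    ext i j
    simp [transpose_mul_self_apply_self_of_sign H hH, diagonal_apply, one_apply]
  simp only [rlcCompression_eq H hm, ← Finset.smul_sum,
    sum_diagonal_signVec_mul_mul_diagonal_signVec, hdiag, smul_smul]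
  congr 1
  ring

end rlcCompression

theorem rlc_compression_contraction_matrix_general (m d K : ℕ) (hm : 0 < m)
    (H : Matrix (Fin m) (Fin d) ℝ)
    (hH : ∀ i j, H i j = 1 ∨ H i j = -1)
    (horth : H * Hᵀ = (d : ℝ) • (1 : Matrix (Fin m) (Fin m) ℝ))
    (X : Matrix (Fin d) (Fin K) ℝ) :
    ((2 : ℝ) ^ d)⁻¹ *
        ∑ s : Fin d → Bool,
          frobSq (X - ((m : ℝ) / d) •
            ((rlcA m d H (signVec s))ᵀ * (rlcA m d H (signVec s) * X)))
      = (1 - (m : ℝ) / d) * frobSq X := by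
  have hsummand : ∀ s : Fin d → Bool,
      frobSq (X - ((m : ℝ) / d) • ((rlcA m d H (signVec s))ᵀ * (rlcA m d H (signVec s) * X)))
        = frobSq X - trace (Xᵀ * rlcCompression m d H (signVec s) * X) := fun s => by
    rw [← Matrix.mul_assoc, ← Matrix.smul_mul, ← rlcCompression]
    exact frobSq_sub_mul_of_isIdempotentElem (rlcCompression_transpose H _)
      (isIdempotentElem_rlcCompression H hm horth s) X
  have hmean : ∑ s : Fin d → Bool, trace (Xᵀ * rlcCompression m d H (signVec s) * X)
      = (2 : ℝ) ^ d * (m / d) * frobSq X := by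
    rw [← trace_sum, ← Matrix.sum_mul, ← Matrix.mul_sum, sum_rlcCompression_signVec H hm hH,
      Matrix.mul_smul, Matrix.mul_one, Matrix.smul_mul, trace_smul, frobSq_eq_trace, smul_eq_mul]
  rw [Finset.sum_congr rfl fun s _ => hsummand s, Finset.sum_sub_distrib, hmean,
    Finset.sum_const, Finset.card_univ, Fintype.card_fun, Fintype.card_bool, Fintype.card_fin,
    nsmul_eq_mul]
  field_simp
  push_cast
  ring

/-- For every `d × K` real matrix `X`,
`𝔼_r‖X − (m/d)·A(r)ᵀ·A(r)·X‖_F² = (1 − m/d)·‖X‖_F²`, where the expectation is over `r`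
uniform on `{−1,+1}^d` and `A(r) = (1/√m)·H·diag(r)` with `H` a partial Hadamard matrix. -/
theorem rlc_compression_contraction_matrix (m d K : ℕ) (hm : 0 < m) (hmd : m ≤ d)
    (H : Matrix (Fin m) (Fin d) ℝ)
    (hH : ∀ i j, H i j = 1 ∨ H i j = -1)
    (horth : H * Hᵀ = (d : ℝ) • (1 : Matrix (Fin m) (Fin m) ℝ))
    (X : Matrix (Fin d) (Fin K) ℝ) :
    ((2 : ℝ) ^ d)⁻¹ *
        ∑ s : Fin d → Bool,
          frobSq (X - ((m : ℝ) / d) •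
            ((rlcA m d H (signVec s))ᵀ * (rlcA m d H (signVec s) * X)))
      = (1 - (m : ℝ) / d) * frobSq X :=
  rlc_compression_contraction_matrix_general m d K hm H hH horth X
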